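/- arXiv:1805.09179 — 2 statements merged into one kernel-verified Lean document; each statement's English description precedes it below -/
import Mathlib

section
/- Let m ≥ 2, let Δ be a flag (2m−1)-dimensional pseudomanifold with n vertices, and let σ be a facet of Δ. Then Σ_{v∈σ} f₀(lk({v},Δ)) ≤ 2(m−1)n + 4m. -/
open Finset

variable {V : Type*} [DecidableEq V]

/-- A simplicial complex on (a subset of) the vertex type `V`: a collection of
finite sets (the faces) that contains the empty set and is closed under inclusion. -/
def IsComplex (Δ : Finset (Finset V)) : Prop :=
  ∅ ∈ Δ ∧ ∀ σ ∈ Δ, ∀ τ ⊆ σ, τ ∈ Δ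

/-- The vertex set `V(Δ)` of a complex. -/
def verts (Δ : Finset (Finset V)) : Finset V := Δ.sup id

/-- The link `lk(σ,Δ) = {τ ∈ Δ : τ ∩ σ = ∅ ∧ τ ∪ σ ∈ Δ}`. -/
def link (Δ : Finset (Finset V)) (σ : Finset V) : Finset (Finset V) :=
  Δ.filter fun τ => τ ∩ σ = ∅ ∧ τ ∪ σ ∈ Δ

/-- The induced subcomplex `Δ[W] = {σ ∈ Δ : σ ⊆ W}`. -/
def induced (Δ : Finset (Finset V)) (W : Finset V) : Finset (Finset V) :=
  Δ.filter fun σ => σ ⊆ W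

/-- `fNum Δ i` is the number `f_i(Δ)` of `i`-dimensional faces of `Δ`,
i.e. of faces of cardinality `i + 1`. -/
def fNum (Δ : Finset (Finset V)) (i : ℕ) : ℕ :=
  (Δ.filter fun σ => σ.card = i + 1).card

/-- `Δ` is flag: every set of vertices all of whose two-element subsets are
faces of `Δ` is itself a face of `Δ`.  (Taking `u = v` below, this in particular
requires each member of `S` to be a vertex of `Δ`.) -/
def IsFlag (Δ : Finset (Finset V)) : Prop :=
  ∀ S : Finset V, (∀ u ∈ S, ∀ v ∈ S, ({u, v} : Finset V) ∈ Δ) → S ∈ Δ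

/-- A facet: an inclusion-maximal face. -/
def IsFacet (Δ : Finset (Finset V)) (σ : Finset V) : Prop :=
  σ ∈ Δ ∧ ∀ τ ∈ Δ, σ ⊆ τ → τ = σ

/-- A `(d-1)`-dimensional pseudomanifold: a pure `(d-1)`-dimensional complex
(all facets have cardinality `d`) in which every `(d-2)`-dimensional face
(cardinality `d-1`) is contained in exactly two facets (= faces of cardinality `d`). -/
def IsPseudomanifold (Δ : Finset (Finset V)) (d : ℕ) : Prop :=
  IsComplex Δ ∧ (∀ σ, IsFacet Δ σ → σ.card = d) ∧
    ∀ τ ∈ Δ, τ.card = d - 1 → (Δ.filter fun σ => σ.card = d ∧ τ ⊆ σ).card = 2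

/-- The 1-skeleton graph of a complex. -/
def skGraph (Δ : Finset (Finset V)) : SimpleGraph V where
  Adj u v := u ≠ v ∧ ({u, v} : Finset V) ∈ Δ
  symm := ⟨fun u v h => ⟨h.1.symm, by rw [Finset.pair_comm]; exact h.2⟩⟩
  loopless := ⟨fun u h => h.1 rfl⟩

/-- The 1-skeleton graph, restricted to the vertex set of `Δ`, is connected. -/
def ConnOn (Δ : Finset (Finset V)) : Prop :=
  ((skGraph Δ).induce (verts Δ : Set V)).Connected

/-- A normal `(d-1)`-pseudomanifold: the 1-skeleton is connected and the
1-skeleton of the link of each face of dimension at most `d-3`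
(cardinality at most `d-2`) is connected. -/
def IsNormalPseudomanifold (Δ : Finset (Finset V)) (d : ℕ) : Prop :=
  IsPseudomanifold Δ d ∧ ConnOn Δ ∧
    ∀ σ ∈ Δ, σ.card + 2 ≤ d → ConnOn (link Δ σ)

/-- A circle (cycle): a connected 1-dimensional pseudomanifold. -/
def IsCircle (Δ : Finset (Finset V)) : Prop :=
  IsPseudomanifold Δ 2 ∧ ConnOn Δ

/-- The 0-dimensional complex consisting of two disjoint vertices. -/
def IsTwoPoints (P : Finset (Finset V)) : Prop :=
  ∃ a b : V, a ≠ b ∧ P = {∅, {a}, {b}}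

/-- The join of two complexes (on disjoint vertex sets): faces `σ ∪ τ`
with `σ ∈ Δ`, `τ ∈ Γ`. -/
def join (Δ Γ : Finset (Finset V)) : Finset (Finset V) :=
  (Δ ×ˢ Γ).image fun p => p.1 ∪ p.2

/-- `Δ` is the suspension of a circle: the join of a circle with two disjoint points. -/
def IsSuspensionOfCircle (Δ : Finset (Finset V)) : Prop :=
  ∃ C P, IsCircle C ∧ IsTwoPoints P ∧ Disjoint (verts C) (verts P) ∧ Δ = join C P

/-- Iterated join of a family of complexes. -/
def joinFam : (m : ℕ) → (Fin m → Finset (Finset V)) → Finset (Finset V)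
  | 0, _ => {∅}
  | m + 1, C => join (C 0) (joinFam m fun i => C i.succ)

/-- `Δ` is the join of `m` circles (on pairwise disjoint vertex sets). -/
def IsJoinOfCircles (Δ : Finset (Finset V)) (m : ℕ) : Prop :=
  ∃ C : Fin m → Finset (Finset V), (∀ i, IsCircle (C i)) ∧
    (∀ i j, i ≠ j → Disjoint (verts (C i)) (verts (C j))) ∧ Δ = joinFam m C

/-- `a_k = Σ_{τ ⊆ σ, |τ| = k} f₀(lk(τ,Δ))`. -/
def aNum (Δ : Finset (Finset V)) (σ : Finset V) (k : ℕ) : ℕ :=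
  ∑ τ ∈ σ.powersetCard k, fNum (link Δ τ) 0

/-- `W_τ`: the vertices `w` of `lk(τ,Δ)` with `{w,u} ∉ Δ` for every `u ∈ σ \ τ`. -/
def Wset (Δ : Finset (Finset V)) (σ τ : Finset V) : Finset V :=
  (verts (link Δ τ)).filter fun w => ∀ u ∈ σ \ τ, ({w, u} : Finset V) ∉ Δ

/-- `b_k = Σ_{τ ⊆ σ, |τ| = k} |W_τ|`. -/
def bNum (Δ : Finset (Finset V)) (σ : Finset V) (k : ℕ) : ℕ :=
  ∑ τ ∈ σ.powersetCard k, (Wset Δ σ τ).card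

/-- The Euler characteristic `χ(Δ) = Σ_{i ≥ 0} (-1)^i f_i(Δ)`, computed as a sum
of `(-1)^{|σ|-1}` over the nonempty faces `σ`. -/
def eulerChar (Δ : Finset (Finset V)) : ℤ :=
  ∑ σ ∈ Δ.filter (fun σ => σ ≠ ∅), (-1 : ℤ) ^ (σ.card - 1)

/-- `Δ` is Eulerian: for every face `σ` (including `σ = ∅`, whose link is `Δ`),
`χ(lk(σ,Δ)) = 1 + (-1)^{dim lk(σ,Δ)}`; since `dim lk(σ,Δ)` is one less than the
maximal cardinality of a face of the link, this equals `1 - (-1)^{max card}`. -/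
def IsEulerian (Δ : Finset (Finset V)) : Prop :=
  ∀ σ ∈ Δ, eulerChar (link Δ σ) = 1 - (-1) ^ ((link Δ σ).sup Finset.card)

/-!
Counting each edge `{v, w}` with `v ∈ σ` from the side of `w`, the sum becomes
`∑_w #(neighbours of w in σ)`. Since `Δ` is flag and `σ` is maximal, every vertex `w` misses
some vertex of `σ` (for `w ∈ σ`, itself), so each term is at most `2m - 1`. A vertex outside
`σ` attaining `2m - 1` is adjacent to the whole ridge `σ \ {v}` for some `v ∈ σ`, hence spans a
facet with it; as a ridge lies in exactly two facets, one of which is `σ`, there is at most one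
such vertex for each `v`. So at most `2m + 2m` terms exceed `2m - 2`, each by one.
-/

def neighborsIn (Δ : Finset (Finset V)) (σ : Finset V) (w : V) : Finset V :=
  σ.filter fun v => w ≠ v ∧ ({w, v} : Finset V) ∈ Δ

def almostCone (Δ : Finset (Finset V)) (σ : Finset V) : Finset V :=
  (verts Δ \ σ).filter fun w => #σ ≤ #(neighborsIn Δ σ w) + 1

section

variable {Δ : Finset (Finset V)} {σ τ : Finset V} {d : ℕ}

lemma mem_verts_of_mem {w : V} (hτ : τ ∈ Δ) (hw : w ∈ τ) : w ∈ verts Δ :=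
  Finset.mem_sup.2 ⟨τ, hτ, hw⟩

lemma fNum_link_singleton_zero (hC : IsComplex Δ) (v : V) :
    fNum (link Δ {v}) 0 = #((verts Δ).filter fun w => w ≠ v ∧ ({w, v} : Finset V) ∈ Δ) := by
  have hpair (w : V) : ({w} : Finset V) ∪ {v} = {w, v} := (insert_eq w {v}).symm
  symm
  refine card_bij (fun w _ => {w}) ?_ (fun _ _ _ _ => singleton_inj.1) ?_
  · intro w hw
    obtain ⟨-, hwv, hedge⟩ := mem_filter.1 hw
    refine mem_filter.2 ⟨mem_filter.2 ⟨hC.2 _ hedge _ (by simp),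
      singleton_inter_of_notMem (by simpa using hwv), hpair w ▸ hedge⟩, card_singleton w⟩
  · intro τ hτ
    obtain ⟨⟨-, hdisj, hunion⟩, hcard⟩ := mem_filter.1 hτ |>.imp_left mem_filter.1
    obtain ⟨w, rfl⟩ := card_eq_one.1 hcard
    rw [hpair] at hunion
    refine ⟨w, mem_filter.2 ⟨mem_verts_of_mem hunion (by simp), ?_, hunion⟩, rfl⟩
    rintro rfl
    simp at hdisj

lemma sum_fNum_link_eq_sum_card_neighborsIn (hC : IsComplex Δ) (σ : Finset V) :
    ∑ v ∈ σ, fNum (link Δ {v}) 0 = ∑ w ∈ verts Δ, #(neighborsIn Δ σ w) := by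
  simp only [fNum_link_singleton_zero hC, neighborsIn, card_filter]
  exact sum_comm

lemma IsFlag.insert_mem (hF : IsFlag Δ) (hC : IsComplex Δ) (hτ : τ ∈ Δ) (hne : τ.Nonempty)
    {w : V} (hadj : ∀ u ∈ τ, ({w, u} : Finset V) ∈ Δ) : insert w τ ∈ Δ := by
  have hw : ({w} : Finset V) ∈ Δ :=
    hC.2 _ (hadj _ hne.choose_spec) _ (singleton_subset_iff.2 (mem_insert_self _ _))
  refine hF _ fun u hu v hv => ?_
  rcases mem_insert.1 hu with rfl | huτ <;> rcases mem_insert.1 hv with rfl | hvτ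
  · simpa using hw
  · exact hadj v hvτ
  · exact pair_comm u _ ▸ hadj u huτ
  · exact hC.2 _ hτ _ (insert_subset huτ (singleton_subset_iff.2 hvτ))

lemma IsFacet.exists_pair_notMem (hF : IsFlag Δ) (hC : IsComplex Δ) (hσ : IsFacet Δ σ)
    (hne : σ.Nonempty) {w : V} (hw : w ∉ σ) : ∃ v ∈ σ, ({w, v} : Finset V) ∉ Δ := by
  by_contra! hadj
  exact hw (hσ.2 _ (hF.insert_mem hC hσ.1 hne hadj) (subset_insert w σ) ▸ mem_insert_self w σ)

lemma IsFacet.card_neighborsIn_lt (hF : IsFlag Δ) (hC : IsComplex Δ) (hσ : IsFacet Δ σ)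
    (hne : σ.Nonempty) (w : V) : #(neighborsIn Δ σ w) < #σ := by
  refine card_lt_card (filter_ssubset.2 ?_)
  by_cases hw : w ∈ σ
  · exact ⟨w, hw, fun h => h.1 rfl⟩
  · obtain ⟨v, hv, hwv⟩ := hσ.exists_pair_notMem hF hC hne hw
    exact ⟨v, hv, fun h => hwv h.2⟩

lemma IsFacet.exists_forall_pair_mem_erase (hF : IsFlag Δ) (hC : IsComplex Δ)
    (hσ : IsFacet Δ σ) (hne : σ.Nonempty) {w : V} (hw : w ∈ almostCone Δ σ) :
    ∃ v ∈ σ, ∀ u ∈ σ.erase v, ({w, u} : Finset V) ∈ Δ := by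
  obtain ⟨hw, hcard⟩ := mem_filter.1 hw
  obtain ⟨v, hv, hwv⟩ := hσ.exists_pair_notMem hF hC hne (mem_sdiff.1 hw).2
  have hsub : neighborsIn Δ σ w ⊆ σ.erase v := fun u hu => by
    obtain ⟨hu, -, hwu⟩ := mem_filter.1 hu
    exact mem_erase.2 ⟨by rintro rfl; exact hwv hwu, hu⟩
  have heq := eq_of_subset_of_card_le hsub (by rw [card_erase_of_mem hv]; omega)
  exact ⟨v, hv, fun u hu => (mem_filter.1 (heq ▸ hu)).2.2⟩

lemma IsPseudomanifold.eq_or_eq_or_eq_of_insert_mem (hP : IsPseudomanifold Δ d) (hτ : τ ∈ Δ)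
    (hτd : #τ + 1 = d) {a b c : V} (ha : a ∉ τ) (hb : b ∉ τ) (hc : c ∉ τ)
    (haΔ : insert a τ ∈ Δ) (hbΔ : insert b τ ∈ Δ) (hcΔ : insert c τ ∈ Δ) :
    a = b ∨ a = c ∨ b = c := by
  have hfacet {x : V} (hx : x ∉ τ) (hxΔ : insert x τ ∈ Δ) :
      insert x τ ∈ Δ.filter fun ρ => #ρ = d ∧ τ ⊆ ρ :=
    mem_filter.2 ⟨hxΔ, by rw [card_insert_of_notMem hx, hτd], subset_insert x τ⟩
  have hinj {x y : V} (hx : x ∉ τ) (h : insert x τ = insert y τ) : x = y :=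
    (mem_insert.1 (h ▸ mem_insert_self x τ)).resolve_right hx
  by_contra! hne
  have := (hP.2.2 τ hτ (by omega)).symm ▸ two_lt_card.2
    ⟨_, hfacet ha haΔ, _, hfacet hb hbΔ, _, hfacet hc hcΔ,
      mt (hinj ha) hne.1, mt (hinj ha) hne.2.1, mt (hinj hb) hne.2.2⟩
  omega

lemma IsPseudomanifold.eq_of_forall_pair_mem_erase (hF : IsFlag Δ) (hP : IsPseudomanifold Δ d)
    (hσ : IsFacet Δ σ) {v : V} (hv : v ∈ σ) (hne : (σ.erase v).Nonempty) {w₁ w₂ : V}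
    (hw₁ : w₁ ∉ σ) (hw₂ : w₂ ∉ σ) (h₁ : ∀ u ∈ σ.erase v, ({w₁, u} : Finset V) ∈ Δ)
    (h₂ : ∀ u ∈ σ.erase v, ({w₂, u} : Finset V) ∈ Δ) : w₁ = w₂ := by
  have hC := hP.1
  have hτ : σ.erase v ∈ Δ := hC.2 _ hσ.1 _ (erase_subset v σ)
  have hnot {w : V} (hw : w ∉ σ) : w ∉ σ.erase v := fun h => hw (mem_of_mem_erase h)
  rcases hP.eq_or_eq_or_eq_of_insert_mem hτ (by rw [card_erase_add_one hv, hP.2.1 σ hσ])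
    (notMem_erase v σ) (hnot hw₁) (hnot hw₂) ((insert_erase hv).symm ▸ hσ.1)
    (hF.insert_mem hC hτ hne h₁) (hF.insert_mem hC hτ hne h₂) with h | h | h
  · exact absurd (h ▸ hv) hw₁
  · exact absurd (h ▸ hv) hw₂
  · exact h

lemma card_almostCone_le (hF : IsFlag Δ) (hP : IsPseudomanifold Δ d) (hd : 2 ≤ d)
    (hσ : IsFacet Δ σ) : #(almostCone Δ σ) ≤ #σ := by
  have hC := hP.1
  have hcard : #σ = d := hP.2.1 σ hσ
  have hne : σ.Nonempty := card_pos.1 (by omega)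
  let opposite (v : V) : Finset V :=
    (almostCone Δ σ).filter fun w => ∀ u ∈ σ.erase v, ({w, u} : Finset V) ∈ Δ
  have hcover : almostCone Δ σ ⊆ σ.biUnion opposite := fun w hw => by
    obtain ⟨v, hv, hadj⟩ := hσ.exists_forall_pair_mem_erase hF hC hne hw
    exact mem_biUnion.2 ⟨v, hv, mem_filter.2 ⟨hw, hadj⟩⟩
  have hopposite : ∀ v ∈ σ, #(opposite v) ≤ 1 := fun v hv => card_le_one.2 fun w₁ h₁ w₂ h₂ => by
    have hout {w : V} (hw : w ∈ opposite v) : w ∉ σ :=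
      (mem_sdiff.1 (mem_filter.1 (mem_filter.1 hw).1).1).2
    refine hP.eq_of_forall_pair_mem_erase hF hσ hv (card_pos.1 ?_) (hout h₁) (hout h₂)
      (mem_filter.1 h₁).2 (mem_filter.1 h₂).2
    rw [card_erase_of_mem hv]
    omega
  calc #(almostCone Δ σ) ≤ #(σ.biUnion opposite) := card_le_card hcover
    _ ≤ ∑ v ∈ σ, #(opposite v) := card_biUnion_le
    _ ≤ ∑ _v ∈ σ, 1 := sum_le_sum hopposite
    _ = #σ := card_eq_sum_ones σ |>.symm

lemma sum_indicator_le_card (s t : Finset V) : ∑ w ∈ s, (if w ∈ t then 1 else 0) ≤ #t := by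
  rw [sum_boole, Nat.cast_id]
  exact card_le_card fun w hw => (mem_filter.1 hw).2

lemma sum_card_neighborsIn_le (hF : IsFlag Δ) (hP : IsPseudomanifold Δ d) (hd : 2 ≤ d)
    (hσ : IsFacet Δ σ) :
    ∑ w ∈ verts Δ, #(neighborsIn Δ σ w) ≤ (d - 2) * #(verts Δ) + 2 * d := by
  have hcard : #σ = d := hP.2.1 σ hσ
  have hne : σ.Nonempty := card_pos.1 (by omega)
  have hpointwise : ∀ w ∈ verts Δ, #(neighborsIn Δ σ w) ≤
      (d - 2) + (if w ∈ σ then 1 else 0) + (if w ∈ almostCone Δ σ then 1 else 0) := by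
    intro w hw
    have hlt := hσ.card_neighborsIn_lt hF hP.1 hne w
    by_cases hwσ : w ∈ σ
    · simp only [hwσ, if_true]
      omega
    by_cases hwA : w ∈ almostCone Δ σ
    · simp only [hwA, if_true]
      omega
    · have : #(neighborsIn Δ σ w) + 1 < #σ := by
        simpa [almostCone, hw, hwσ] using hwA
      simp only [hwσ, hwA, if_false]
      omega
  calc ∑ w ∈ verts Δ, #(neighborsIn Δ σ w)
      ≤ ∑ w ∈ verts Δ, ((d - 2) + (if w ∈ σ then 1 else 0) +
          (if w ∈ almostCone Δ σ then 1 else 0)) := sum_le_sum hpointwise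
    _ = (d - 2) * #(verts Δ) + ∑ w ∈ verts Δ, (if w ∈ σ then 1 else 0) +
          ∑ w ∈ verts Δ, (if w ∈ almostCone Δ σ then 1 else 0) := by
      rw [sum_add_distrib, sum_add_distrib, sum_const, smul_eq_mul, mul_comm]
    _ ≤ (d - 2) * #(verts Δ) + #σ + #(almostCone Δ σ) := by
      gcongr <;> exact sum_indicator_le_card _ _
    _ ≤ (d - 2) * #(verts Δ) + 2 * d := by
      have := card_almostCone_le hF hP hd hσ
      omega

end

/-- Let `m ≥ 2`, let `Δ` be a flag `(2m-1)`-dimensional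
pseudomanifold with `n` vertices and `σ` a facet.  Then
`Σ_{v ∈ σ} f₀(lk({v},Δ)) ≤ 2(m-1)n + 4m`. -/
theorem sum_of_vertex_links_le (m : ℕ) (hm : 2 ≤ m) (Δ : Finset (Finset V))
    (hF : IsFlag Δ) (hP : IsPseudomanifold Δ (2 * m)) (n : ℕ)
    (hn : (verts Δ).card = n) (σ : Finset V) (hσ : IsFacet Δ σ) :
    ∑ v ∈ σ, fNum (link Δ {v}) 0 ≤ 2 * (m - 1) * n + 4 * m := by
  rw [sum_fNum_link_eq_sum_card_neighborsIn hP.1, Nat.mul_sub_one, ← hn]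
  have := sum_card_neighborsIn_le hF hP (by omega) hσ
  omega
end

section
/- Let m ≥ 2, let Δ be a flag (2m−1)-dimensional pseudomanifold with n vertices, and let σ be a facet of Δ such that Σ_{v∈σ} f₀(lk({v},Δ)) = 2(m−1)n + 4m. Then (i) for every face τ ⊆ σ with |σ∖τ| ≥ 3, the union ∪_{v∈σ∖τ} V(lk(τ∪{v},Δ)) equals V(lk(τ,Δ)); and (ii) the union ∪_{δ⊆σ, |δ|=2m−2} V(lk(δ,Δ)) over all subsets δ of σ of cardinality 2m−2 equals V(Δ). -/
open Finset

variable {V : Type*} [DecidableEq V]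

/-!
Let `N(w)` be the set of neighbours in `σ` of a vertex `w`. Flagness makes `w` a vertex of
`lk(τ,Δ)` exactly when `τ ⊆ N(w)`, for every `τ ⊆ σ`, so that
`a_k = Σ_{τ ⊆ σ, |τ| = k} f₀(lk(τ,Δ)) = Σ_w C(|N(w)|, k)`.
Maximality of `σ` gives `|N(w)| ≤ 2m - 1`, and since each ridge of `σ` lies in exactly two
facets, `a_{2m-1} = 2 · 2m`: exactly `4m` vertices have `|N(w)| = 2m - 1`. Hence
`a_1 = Σ_w |N(w)| ≤ (2m - 2) n + 4m`, and equality forces `|N(w)| ≥ 2m - 2` for every vertex `w`.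
Both (i) and (ii) follow by choosing the required faces of `σ` inside `N(w)`.
-/

theorem forall_le_of_mul_card_add_card_le_sum {ι : Type*} {s : Finset ι} {f : ι → ℕ} {k : ℕ}
    (hf : ∀ i ∈ s, f i ≤ k + 1) (hsum : k * #s + #{i ∈ s | f i = k + 1} ≤ ∑ i ∈ s, f i) :
    ∀ i ∈ s, k ≤ f i := by
  set g : ι → ℕ := fun i => k + if f i = k + 1 then 1 else 0
  have hfg : ∀ i ∈ s, f i ≤ g i := fun i hi => by
    have := hf i hi
    simp only [g]
    split_ifs <;> omega
  have hg : ∑ i ∈ s, g i = k * #s + #{i ∈ s | f i = k + 1} := by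
    simp only [g, sum_add_distrib, sum_const, smul_eq_mul, card_filter, mul_comm]
  have hfg_eq := (sum_eq_sum_iff_of_le hfg).1 (le_antisymm (sum_le_sum hfg) (hg ▸ hsum))
  intro i hi
  have := hfg_eq i hi
  simp only [g] at this
  omega

section Link

variable {Δ : Finset (Finset V)} {σ τ τ' : Finset V} {v w : V}

theorem mem_verts : w ∈ verts Δ ↔ ∃ ρ ∈ Δ, w ∈ ρ := by
  simp [verts, mem_sup]

theorem verts_link_subset : verts (link Δ τ) ⊆ verts Δ :=
  sup_mono (filter_subset _ _)

theorem singleton_mem_link (hC : IsComplex Δ) : {w} ∈ link Δ τ ↔ w ∉ τ ∧ insert w τ ∈ Δ := by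
  simp only [link, mem_filter, ← disjoint_iff_inter_eq_empty, disjoint_singleton_left, ← insert_eq]
  exact ⟨fun h => h.2, fun h => ⟨hC.2 _ h.2 _ (singleton_subset_iff.2 (mem_insert_self _ _)), h⟩⟩

theorem mem_verts_link (hC : IsComplex Δ) : w ∈ verts (link Δ τ) ↔ w ∉ τ ∧ insert w τ ∈ Δ := by
  refine ⟨fun h => ?_, fun h => mem_verts.2 ⟨_, (singleton_mem_link hC).2 h, mem_singleton_self w⟩⟩
  obtain ⟨ρ, hρ, hwρ⟩ := mem_verts.1 h
  obtain ⟨-, hρτ, hρτΔ⟩ := mem_filter.1 hρ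
  refine ⟨fun hwτ => ?_, hC.2 _ hρτΔ _ (insert_subset (mem_union_left _ hwρ) subset_union_right)⟩
  simpa [hρτ] using mem_inter.2 ⟨hwρ, hwτ⟩

theorem verts_link_anti (hC : IsComplex Δ) (h : τ ⊆ τ') :
    verts (link Δ τ') ⊆ verts (link Δ τ) := by
  intro w hw
  rw [mem_verts_link hC] at hw ⊢
  exact ⟨fun hwτ => hw.1 (h hwτ), hC.2 _ hw.2 _ (insert_subset_insert w h)⟩

theorem fNum_link_zero (hC : IsComplex Δ) : fNum (link Δ τ) 0 = #(verts (link Δ τ)) := by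
  rw [fNum, ← card_map (s := verts (link Δ τ)) ⟨singleton, singleton_injective⟩]
  refine congrArg card (ext fun ρ => ?_)
  simp only [mem_filter, mem_map, Function.Embedding.coeFn_mk, zero_add, card_eq_one]
  constructor
  · rintro ⟨hρ, w, rfl⟩
    exact ⟨w, (mem_verts_link hC).2 ((singleton_mem_link hC).1 hρ), rfl⟩
  · rintro ⟨w, hw, rfl⟩
    exact ⟨(singleton_mem_link hC).2 ((mem_verts_link hC).1 hw), w, rfl⟩

theorem card_verts_link_of_card_add_one_eq {d : ℕ} (hP : IsPseudomanifold Δ d) (hτ : τ ∈ Δ)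
    (hd : #τ + 1 = d) : #(verts (link Δ τ)) = 2 := by
  rw [← hP.2.2 τ hτ (by omega)]
  refine card_bij (fun w _ => insert w τ) (fun w hw => ?_) (fun a ha b _ hab => ?_) (fun ρ hρ => ?_)
  · obtain ⟨hwτ, hins⟩ := (mem_verts_link hP.1).1 hw
    exact mem_filter.2 ⟨hins, by rw [card_insert_of_notMem hwτ, hd], subset_insert _ _⟩
  · exact (insert_inj ((mem_verts_link hP.1).1 ha).1).1 hab
  · obtain ⟨hρΔ, hρd, hτρ⟩ := mem_filter.1 hρ
    obtain ⟨w, hwτ, rfl⟩ := exists_eq_insert_iff.2 ⟨hτρ, by omega⟩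
    exact ⟨w, (mem_verts_link hP.1).2 ⟨hwτ, hρΔ⟩, rfl⟩

end Link

def nbrsIn (Δ : Finset (Finset V)) (σ : Finset V) (w : V) : Finset V :=
  σ.filter fun v => w ≠ v ∧ {w, v} ∈ Δ

section Neighbours

variable {Δ : Finset (Finset V)} {σ τ : Finset V} {v w : V}

theorem mem_nbrsIn : v ∈ nbrsIn Δ σ w ↔ v ∈ σ ∧ w ≠ v ∧ {w, v} ∈ Δ :=
  mem_filter

theorem nbrsIn_subset : nbrsIn Δ σ w ⊆ σ :=
  filter_subset _ _

theorem mem_verts_link_iff_subset_nbrsIn (hC : IsComplex Δ) (hF : IsFlag Δ) (hσ : σ ∈ Δ)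
    (hw : w ∈ verts Δ) (hτ : τ ⊆ σ) : w ∈ verts (link Δ τ) ↔ τ ⊆ nbrsIn Δ σ w := by
  rw [mem_verts_link hC]
  constructor
  · rintro ⟨hwτ, hins⟩ v hv
    exact mem_nbrsIn.2 ⟨hτ hv, fun h => hwτ (h ▸ hv),
      hC.2 _ hins _ (insert_subset_insert w (singleton_subset_iff.2 hv))⟩
  · intro hτN
    have hwτ : w ∉ τ := fun h => (mem_nbrsIn.1 (hτN h)).2.1 rfl
    have hw_pair : ∀ v ∈ insert w τ, ({w, v} : Finset V) ∈ Δ := by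
      intro v hv
      rcases mem_insert.1 hv with rfl | hv
      · obtain ⟨ρ, hρ, hwρ⟩ := mem_verts.1 hw
        rw [pair_eq_singleton]
        exact hC.2 ρ hρ _ (singleton_subset_iff.2 hwρ)
      · exact (mem_nbrsIn.1 (hτN hv)).2.2
    refine ⟨hwτ, hF _ fun u hu v hv => ?_⟩
    rcases mem_insert.1 hu with rfl | huτ
    · exact hw_pair v hv
    rcases mem_insert.1 hv with rfl | hvτ
    · rw [pair_comm]
      exact hw_pair u hu
    · exact hC.2 σ hσ _ (insert_subset (hτ huτ) (singleton_subset_iff.2 (hτ hvτ)))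

theorem card_nbrsIn_lt (hC : IsComplex Δ) (hF : IsFlag Δ) (hσ : IsFacet Δ σ)
    (hw : w ∈ verts Δ) : #(nbrsIn Δ σ w) < #σ := by
  refine card_lt_card (nbrsIn_subset.ssubset_of_ne fun h => ?_)
  obtain ⟨hwσ, hins⟩ := (mem_verts_link hC).1
    ((mem_verts_link_iff_subset_nbrsIn hC hF hσ.1 hw subset_rfl).2 h.superset)
  exact hwσ (hσ.2 _ hins (subset_insert w σ) ▸ mem_insert_self w σ)

theorem aNum_eq_sum_choose (hC : IsComplex Δ) (hF : IsFlag Δ) (hσ : σ ∈ Δ) (k : ℕ) :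
    aNum Δ σ k = ∑ w ∈ verts Δ, (#(nbrsIn Δ σ w)).choose k := by
  let r : Finset V → V → Prop := fun τ w => w ∈ verts (link Δ τ)
  calc aNum Δ σ k = ∑ τ ∈ σ.powersetCard k, #((verts Δ).bipartiteAbove r τ) := by
        refine sum_congr rfl fun τ _ => ?_
        rw [fNum_link_zero hC, bipartiteAbove, filter_mem_eq_inter,
          inter_eq_right.2 verts_link_subset]
    _ = ∑ w ∈ verts Δ, #((σ.powersetCard k).bipartiteBelow r w) :=
        sum_card_bipartiteAbove_eq_sum_card_bipartiteBelow r
    _ = ∑ w ∈ verts Δ, (#(nbrsIn Δ σ w)).choose k := by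
        refine sum_congr rfl fun w hw => ?_
        rw [← card_powersetCard]
        congr 1
        ext τ
        simp only [bipartiteBelow, r, mem_filter, mem_powersetCard]
        constructor
        · rintro ⟨⟨hτσ, hk⟩, h⟩
          exact ⟨(mem_verts_link_iff_subset_nbrsIn hC hF hσ hw hτσ).1 h, hk⟩
        · rintro ⟨hτN, hk⟩
          have hτσ := hτN.trans nbrsIn_subset
          exact ⟨⟨hτσ, hk⟩, (mem_verts_link_iff_subset_nbrsIn hC hF hσ hw hτσ).2 hτN⟩

theorem aNum_one : aNum Δ σ 1 = ∑ v ∈ σ, fNum (link Δ {v}) 0 := by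
  rw [aNum, powersetCard_one, sum_map]
  rfl

theorem aNum_sub_one_eq_two_mul {d : ℕ} (hP : IsPseudomanifold Δ d) (hd : 1 ≤ d)
    (hσ : IsFacet Δ σ) : aNum Δ σ (d - 1) = 2 * d := by
  calc aNum Δ σ (d - 1) = ∑ τ ∈ σ.powersetCard (d - 1), 2 := by
        refine sum_congr rfl fun τ hτ => ?_
        obtain ⟨hτσ, hτd⟩ := mem_powersetCard.1 hτ
        rw [fNum_link_zero hP.1]
        exact card_verts_link_of_card_add_one_eq hP (hP.1.2 σ hσ.1 τ hτσ) (by omega)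
    _ = 2 * d := by
        rw [sum_const, card_powersetCard, hP.2.1 σ hσ, Nat.choose_symm hd, Nat.choose_one_right,
          smul_eq_mul, mul_comm]

theorem sub_two_le_card_nbrsIn {d : ℕ} (hF : IsFlag Δ) (hP : IsPseudomanifold Δ d) (hd : 2 ≤ d)
    (hσ : IsFacet Δ σ) (ha : (d - 2) * #(verts Δ) + 2 * d ≤ aNum Δ σ 1) (hw : w ∈ verts Δ) :
    d - 2 ≤ #(nbrsIn Δ σ w) := by
  have hC := hP.1
  have hle : ∀ u ∈ verts Δ, #(nbrsIn Δ σ u) ≤ d - 2 + 1 := fun u hu => by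
    have := card_nbrsIn_lt hC hF hσ hu
    have := hP.2.1 σ hσ
    omega
  have hmax : #{u ∈ verts Δ | #(nbrsIn Δ σ u) = d - 2 + 1} = 2 * d := by
    rw [← aNum_sub_one_eq_two_mul hP (by omega) hσ, aNum_eq_sum_choose hC hF hσ.1,
      card_filter]
    refine sum_congr rfl fun u hu => ?_
    rcases (hle u hu).eq_or_lt with h | h
    · rw [if_pos h, h, show d - 2 + 1 = d - 1 by omega, Nat.choose_self]
    · rw [if_neg h.ne, Nat.choose_eq_zero_of_lt (by omega)]
  refine forall_le_of_mul_card_add_card_le_sum hle ?_ w hw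
  simpa [hmax, aNum_eq_sum_choose hC hF hσ.1] using ha

end Neighbours

/-- Let `m ≥ 2`, let `Δ` be a flag `(2m-1)`-dimensional
pseudomanifold with `n` vertices and `σ` a facet with
`Σ_{v ∈ σ} f₀(lk({v},Δ)) = 2(m-1)n + 4m`.  Then
(i) for every face `τ ⊆ σ` with `|σ \ τ| ≥ 3`,
`∪_{v ∈ σ\τ} V(lk(τ ∪ {v},Δ)) = V(lk(τ,Δ))`; and
(ii) `∪_{δ ⊆ σ, |δ| = 2m-2} V(lk(δ,Δ)) = V(Δ)`. -/
theorem sum_of_vertex_links_eq (m : ℕ) (hm : 2 ≤ m) (Δ : Finset (Finset V))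
    (hF : IsFlag Δ) (hP : IsPseudomanifold Δ (2 * m)) (n : ℕ)
    (hn : (verts Δ).card = n) (σ : Finset V) (hσ : IsFacet Δ σ)
    (heq : ∑ v ∈ σ, fNum (link Δ {v}) 0 = 2 * (m - 1) * n + 4 * m) :
    (∀ τ ⊆ σ, 3 ≤ (σ \ τ).card →
        ((σ \ τ).biUnion fun v => verts (link Δ (insert v τ))) = verts (link Δ τ)) ∧
      ((σ.powersetCard (2 * m - 2)).biUnion fun δ => verts (link Δ δ)) = verts Δ := by
  have hC := hP.1
  have hdeg : ∀ w ∈ verts Δ, #σ - 2 ≤ #(nbrsIn Δ σ w) := fun w hw => by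
    rw [hP.2.1 σ hσ]
    refine sub_two_le_card_nbrsIn hF hP (by omega) hσ ?_ hw
    rw [aNum_one, heq, hn, show 2 * m - 2 = 2 * (m - 1) by omega]
    exact (by ring : 2 * (m - 1) * n + 2 * (2 * m) = _).le
  have hlink : ∀ {w τ}, w ∈ verts Δ → τ ⊆ σ → (w ∈ verts (link Δ τ) ↔ τ ⊆ nbrsIn Δ σ w) :=
    mem_verts_link_iff_subset_nbrsIn hC hF hσ.1
  refine ⟨fun τ hτσ h3 => ?_, ?_⟩
  · refine Subset.antisymm (biUnion_subset.2 fun v _ => verts_link_anti hC (subset_insert v τ)) ?_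
    intro w hw
    have hwΔ := verts_link_subset hw
    have hτN := (hlink hwΔ hτσ).1 hw
    obtain ⟨v, hv, hvN⟩ := exists_mem_notMem_of_card_lt_card (s := σ \ nbrsIn Δ σ w)
      (t := σ \ τ) (by have := hdeg w hwΔ; rw [card_sdiff_of_subset nbrsIn_subset]; omega)
    have hvσ := (mem_sdiff.1 hv).1
    have hvN' : v ∈ nbrsIn Δ σ w := by_contra fun h => hvN (mem_sdiff.2 ⟨hvσ, h⟩)
    exact mem_biUnion.2
      ⟨v, hv, (hlink hwΔ (insert_subset hvσ hτσ)).2 (insert_subset hvN' hτN)⟩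
  · refine Subset.antisymm (biUnion_subset.2 fun δ _ => verts_link_subset) fun w hw => ?_
    obtain ⟨δ, hδN, hδcard⟩ := exists_subset_card_eq (hP.2.1 σ hσ ▸ hdeg w hw)
    have hδσ := hδN.trans nbrsIn_subset
    exact mem_biUnion.2 ⟨δ, mem_powersetCard.2 ⟨hδσ, hδcard⟩, (hlink hw hδσ).2 hδN⟩
end
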